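/- Let 0 ≤ α < 1. For every function u that is locally absolutely continuous on (0,1), satisfies u(x) → 0 as x → 0⁺, and satisfies ∫₀¹ x^α u'(x)² dx < ∞, the following Hardy-type inequality holds: ∫₀¹ x^{α−2} u(x)² dx ≤ (4/(1−α)²) ∫₀¹ x^α u'(x)² dx. -/

import Mathlib

open MeasureTheory Set
open scoped ENNReal

private theorem hardy_meas (u' : ℝ → ℝ)
    (hint : ∀ x ∈ Ioo (0:ℝ) 1, ∀ y ∈ Ioo (0:ℝ) 1, IntervalIntegrable u' volume x y) :
    AEMeasurable u' (volume.restrict (Ioo (0:ℝ) 1)) := by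
  have hcover : Ioo (0:ℝ) 1 = ⋃ n : ℕ, Ioc (1/(n+2) : ℝ) ((n+1)/(n+2)) := by
    ext t
    simp only [mem_Ioo, mem_iUnion, mem_Ioc]
    constructor
    · rintro ⟨ht0, ht1⟩
      obtain ⟨n, hn⟩ := exists_nat_gt (max (1/t) (1/(1-t)))
      refine ⟨n, ?_, ?_⟩
      · rw [div_lt_iff₀ (by positivity)]
        have h1 : 1/t < n := lt_of_le_of_lt (le_max_left _ _) hn
        rw [div_lt_iff₀ ht0] at h1
        nlinarith
      · rw [le_div_iff₀ (by positivity)]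
        have h2 : 1/(1-t) < n := lt_of_le_of_lt (le_max_right _ _) hn
        rw [div_lt_iff₀ (by linarith)] at h2
        nlinarith
    · rintro ⟨n, hn1, hn2⟩
      have hn0 : (0:ℝ) < (n:ℝ)+2 := by positivity
      constructor
      · have : (0:ℝ) < 1/((n:ℝ)+2) := by positivity
        linarith
      · have : ((n:ℝ)+1)/((n:ℝ)+2) < 1 := by rw [div_lt_one hn0]; linarith
        linarith
  rw [hcover, aemeasurable_iUnion_iff]
  intro n
  have hn0 : (0:ℝ) < (n:ℝ)+2 := by positivity
  have h1 : (1/((n:ℝ)+2)) ∈ Ioo (0:ℝ) 1 := by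
    constructor
    · positivity
    · rw [div_lt_one hn0]; linarith
  have h2 : (((n:ℝ)+1)/((n:ℝ)+2)) ∈ Ioo (0:ℝ) 1 := by
    constructor
    · positivity
    · rw [div_lt_one hn0]; linarith
  exact ((hint _ h1 _ h2).1.aestronglyMeasurable.aemeasurable)

private theorem hardy_lintA (β x : ℝ) (hβ1 : β < 1) (hx : 0 < x) :
    ∫⁻ t in Ioo (0:ℝ) x, ENNReal.ofReal (t ^ (-β)) = ENNReal.ofReal (x ^ (1-β)/(1-β)) := by
  have hii : IntervalIntegrable (fun t : ℝ => t ^ (-β)) volume 0 x :=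
    intervalIntegral.intervalIntegrable_rpow' (by linarith)
  have hv : ∫ t in (0:ℝ)..x, t ^ (-β) = x ^ (1-β)/(1-β) := by
    rw [integral_rpow (Or.inl (by linarith))]
    rw [Real.zero_rpow (by linarith : -β + 1 ≠ 0)]
    ring_nf
  rw [(Measure.restrict_congr_set Ioo_ae_eq_Ioc : _), ← hv,
    intervalIntegral.integral_of_le hx.le,
    ofReal_integral_eq_lintegral_ofReal
      ((intervalIntegrable_iff_integrableOn_Ioc_of_le hx.le).1 hii)
      (by filter_upwards [ae_restrict_mem measurableSet_Ioc] with t ht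
          exact Real.rpow_nonneg ht.1.le _)]

private theorem hardy_lintB (γ t : ℝ) (hγ : γ < -1) (ht : 0 < t) (ht1 : t < 1) :
    ∫⁻ x in Ioo t 1, ENNReal.ofReal (x ^ γ) = ENNReal.ofReal ((t ^ (γ+1) - 1)/(-(γ+1))) := by
  have hγ1 : γ + 1 ≠ 0 := by linarith
  have hne : (0:ℝ) ∉ uIcc t 1 := by
    rw [uIcc_of_le ht1.le]
    exact fun h => absurd h.1 (not_le.2 ht)
  have hcont : ContinuousOn (fun x : ℝ => x ^ γ) (uIcc t 1) := fun x hx =>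
    (Real.continuousAt_rpow_const x γ (Or.inl (fun h => hne (h ▸ hx)))).continuousWithinAt
  have hii : IntervalIntegrable (fun x : ℝ => x ^ γ) volume t 1 := hcont.intervalIntegrable
  have hv : ∫ x in t..(1:ℝ), x ^ γ = (t ^ (γ+1) - 1)/(-(γ+1)) := by
    rw [integral_rpow (Or.inr ⟨by linarith, hne⟩), Real.one_rpow]
    rw [div_neg, ← neg_div, neg_sub]
  rw [(Measure.restrict_congr_set Ioo_ae_eq_Ioc : _), ← hv,
    intervalIntegral.integral_of_le ht1.le,
    ofReal_integral_eq_lintegral_ofReal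
      ((intervalIntegrable_iff_integrableOn_Ioc_of_le ht1.le).1 hii)
      (by filter_upwards [ae_restrict_mem measurableSet_Ioc] with x hx
          exact Real.rpow_nonneg (le_of_lt (lt_trans ht hx.1)) _)]

private theorem hardy_CS (β x : ℝ) (hβ1 : β < 1) (hx : 0 < x) (g : ℝ → ℝ)
    (hg : AEMeasurable g (volume.restrict (Ioo (0:ℝ) x))) :
    (∫⁻ t in Ioo (0:ℝ) x, ENNReal.ofReal |g t|) ^ 2 ≤
      ENNReal.ofReal (x ^ (1-β)/(1-β)) * ∫⁻ t in Ioo (0:ℝ) x, ENNReal.ofReal (t ^ β * g t ^ 2) := by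
  set f1 : ℝ → ℝ≥0∞ := fun t => ENNReal.ofReal (t ^ (-(β/2))) with hf1def
  set f2 : ℝ → ℝ≥0∞ := fun t => ENNReal.ofReal (t ^ (β/2) * |g t|) with hf2def
  have hrm : ∀ c : ℝ, Measurable (fun t : ℝ => t ^ c) := fun c => by measurability
  have hf1 : AEMeasurable f1 (volume.restrict (Ioo (0:ℝ) x)) :=
    ((hrm _).ennreal_ofReal).aemeasurable
  have hf2 : AEMeasurable f2 (volume.restrict (Ioo (0:ℝ) x)) :=
    (((hrm _).aemeasurable.mul
      (measurable_abs.comp_aemeasurable hg))).ennreal_ofReal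
  have hsplit : ∫⁻ t in Ioo (0:ℝ) x, ENNReal.ofReal |g t| =
      ∫⁻ t in Ioo (0:ℝ) x, (f1 * f2) t := by
    refine lintegral_congr_ae ?_
    filter_upwards [ae_restrict_mem measurableSet_Ioo] with t ht
    have ht0 : 0 < t := ht.1
    simp only [Pi.mul_apply, hf1def, hf2def]
    rw [← ENNReal.ofReal_mul (Real.rpow_nonneg ht0.le _), ← mul_assoc,
      ← Real.rpow_add ht0]
    norm_num
  have hP : ∫⁻ t in Ioo (0:ℝ) x, f1 t ^ (2:ℝ) = ENNReal.ofReal (x ^ (1-β)/(1-β)) := by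
    rw [← hardy_lintA β x hβ1 hx]
    refine lintegral_congr_ae ?_
    filter_upwards [ae_restrict_mem measurableSet_Ioo] with t ht
    rw [hf1def, ENNReal.ofReal_rpow_of_pos (Real.rpow_pos_of_pos ht.1 _),
      Real.rpow_two, sq, ← Real.rpow_add ht.1]
    ring_nf
  have hQ : ∫⁻ t in Ioo (0:ℝ) x, f2 t ^ (2:ℝ) =
      ∫⁻ t in Ioo (0:ℝ) x, ENNReal.ofReal (t ^ β * g t ^ 2) := by
    refine lintegral_congr_ae ?_
    filter_upwards [ae_restrict_mem measurableSet_Ioo] with t ht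
    rw [hf2def, ENNReal.ofReal_rpow_of_nonneg
        (mul_nonneg (Real.rpow_nonneg ht.1.le _) (abs_nonneg _)) (by norm_num)]
    congr 1
    rw [Real.rpow_two, mul_pow, sq_abs, sq, ← Real.rpow_add ht.1]
    ring_nf
  have hH := ENNReal.lintegral_mul_le_Lp_mul_Lq (volume.restrict (Ioo (0:ℝ) x))
    (Real.HolderConjugate.two_two : Real.HolderConjugate 2 2) hf1 hf2
  rw [hP, hQ] at hH
  rw [hsplit]
  calc (∫⁻ t in Ioo (0:ℝ) x, (f1 * f2) t) ^ 2
      ≤ (ENNReal.ofReal (x ^ (1-β)/(1-β)) ^ (1/(2:ℝ)) *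
        (∫⁻ t in Ioo (0:ℝ) x, ENNReal.ofReal (t ^ β * g t ^ 2)) ^ (1/(2:ℝ))) ^ 2 :=
        pow_le_pow_left' hH 2
    _ = _ := by
        rw [mul_pow, ← ENNReal.rpow_natCast (_ ^ (1/(2:ℝ))) 2,
          ← ENNReal.rpow_natCast ((∫⁻ t in Ioo (0:ℝ) x,
            ENNReal.ofReal (t ^ β * g t ^ 2)) ^ (1/(2:ℝ))) 2,
          ← ENNReal.rpow_mul, ← ENNReal.rpow_mul]
        norm_num

private theorem hardy_ptwise (β : ℝ) (hβ1 : β < 1) (u u' : ℝ → ℝ)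
    (hint : ∀ x ∈ Ioo (0:ℝ) 1, ∀ y ∈ Ioo (0:ℝ) 1, IntervalIntegrable u' volume x y)
    (hFTC : ∀ x ∈ Ioo (0:ℝ) 1, ∀ y ∈ Ioo (0:ℝ) 1, u y - u x = ∫ t in x..y, u' t)
    (hlim : Filter.Tendsto u (nhdsWithin 0 (Ioi 0)) (nhds 0))
    (hmeas : AEMeasurable u' (volume.restrict (Ioo (0:ℝ) 1)))
    (x : ℝ) (hx : x ∈ Ioo (0:ℝ) 1) :
    ENNReal.ofReal (u x ^ 2) ≤
      ENNReal.ofReal (x ^ (1-β)/(1-β)) * ∫⁻ t in Ioo (0:ℝ) x, ENNReal.ofReal (t ^ β * u' t ^ 2) := by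
  have hx0 := hx.1
  have hx1 := hx.2
  set R := ENNReal.ofReal (x ^ (1-β)/(1-β)) *
      ∫⁻ t in Ioo (0:ℝ) x, ENNReal.ofReal (t ^ β * u' t ^ 2) with hR
  have hmeas' : AEMeasurable u' (volume.restrict (Ioo (0:ℝ) x)) :=
    hmeas.mono_measure (Measure.restrict_mono (Ioo_subset_Ioo le_rfl hx1.le) le_rfl)
  have key : ∀ ε ∈ Ioo (0:ℝ) x, (ENNReal.ofReal |u x - u ε|) ^ 2 ≤ R := by
    intro ε hε
    have hε1 : ε ∈ Ioo (0:ℝ) 1 := ⟨hε.1, hε.2.trans hx1⟩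
    have heq : u x - u ε = ∫ t in ε..x, u' t := hFTC ε hε1 x hx
    have hii : IntegrableOn u' (Ioc ε x) volume :=
      (intervalIntegrable_iff_integrableOn_Ioc_of_le hε.2.le).1 (hint ε hε1 x hx)
    have h1 : ENNReal.ofReal |u x - u ε| ≤ ∫⁻ t in Ioo (0:ℝ) x, ENNReal.ofReal |u' t| := by
      rw [heq]
      calc ENNReal.ofReal |∫ t in ε..x, u' t|
          ≤ ENNReal.ofReal (∫ t in ε..x, |u' t|) :=
            ENNReal.ofReal_le_ofReal
              (intervalIntegral.abs_integral_le_integral_abs hε.2.le)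
        _ = ∫⁻ t in Ioc ε x, ENNReal.ofReal |u' t| := by
            rw [intervalIntegral.integral_of_le hε.2.le,
              ofReal_integral_eq_lintegral_ofReal hii.abs
                (Filter.Eventually.of_forall fun t => abs_nonneg _)]
        _ ≤ ∫⁻ t in Ioc (0:ℝ) x, ENNReal.ofReal |u' t| :=
            lintegral_mono_set (Ioc_subset_Ioc hε.1.le le_rfl)
        _ = ∫⁻ t in Ioo (0:ℝ) x, ENNReal.ofReal |u' t| := by
            rw [(Measure.restrict_congr_set Ioo_ae_eq_Ioc : _)]
    calc (ENNReal.ofReal |u x - u ε|) ^ 2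
        ≤ (∫⁻ t in Ioo (0:ℝ) x, ENNReal.ofReal |u' t|) ^ 2 := pow_le_pow_left' h1 2
      _ ≤ R := hardy_CS β x hβ1 hx0 u' hmeas'
  have htend : Filter.Tendsto (fun ε => (ENNReal.ofReal |u x - u ε|) ^ 2)
      (nhdsWithin 0 (Ioi 0)) (nhds ((ENNReal.ofReal |u x - 0|) ^ 2)) := by
    exact ENNReal.Tendsto.pow ((ENNReal.continuous_ofReal.tendsto _).comp
      ((tendsto_const_nhds.sub hlim).abs))
  have hfinal : (ENNReal.ofReal |u x - 0|) ^ 2 ≤ R :=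
    le_of_tendsto htend (Filter.eventually_of_mem
      (Ioo_mem_nhdsGT_of_mem (⟨le_rfl, hx0⟩ : (0:ℝ) ∈ Ico 0 x)) key)
  calc ENNReal.ofReal (u x ^ 2) = (ENNReal.ofReal |u x - 0|) ^ 2 := by
        rw [sub_zero, ← ENNReal.ofReal_pow (abs_nonneg _), sq_abs]
    _ ≤ R := hfinal

private theorem hardy_tonelli (γ : ℝ) (G : ℝ → ℝ≥0∞) (hG : Measurable G) :
    ∫⁻ x in Ioo (0:ℝ) 1, (ENNReal.ofReal (x^γ) * ∫⁻ t in Ioo (0:ℝ) x, G t)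
      = ∫⁻ t in Ioo (0:ℝ) 1, (G t * ∫⁻ x in Ioo t 1, ENNReal.ofReal (x^γ)) := by
  set S : Set (ℝ × ℝ) := {p | p.2 < p.1} with hS
  have hSm : MeasurableSet S := measurableSet_lt measurable_snd measurable_fst
  set F : ℝ → ℝ → ℝ≥0∞ := fun x t =>
    ENNReal.ofReal (x^γ) * S.indicator (fun _ => (1:ℝ≥0∞)) (x, t) * G t with hF
  have hFm : AEMeasurable (Function.uncurry F)
      ((volume.restrict (Ioo (0:ℝ) 1)).prod (volume.restrict (Ioo (0:ℝ) 1))) := by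
    refine Measurable.aemeasurable ?_
    have h1 : Measurable fun p : ℝ × ℝ => ENNReal.ofReal (p.1 ^ γ) :=
      ((by measurability : Measurable fun x : ℝ => x ^ γ).comp measurable_fst).ennreal_ofReal
    exact ((h1.mul ((measurable_const (a := (1:ℝ≥0∞))).indicator hSm)).mul
      (hG.comp measurable_snd))
  have hL : ∫⁻ x in Ioo (0:ℝ) 1, (ENNReal.ofReal (x^γ) * ∫⁻ t in Ioo (0:ℝ) x, G t)
      = ∫⁻ x in Ioo (0:ℝ) 1, ∫⁻ t in Ioo (0:ℝ) 1, F x t := by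
    refine setLIntegral_congr_fun measurableSet_Ioo ?_
    intro x hx
    beta_reduce
    have h1 : (fun t => F x t) = fun t => ENNReal.ofReal (x^γ) * (Iio x).indicator G t := by
      funext t
      by_cases h : t < x
      · simp [hF, hS, h, Set.indicator_of_mem, mem_Iio.2 h]
      · simp [hF, hS, h, Set.indicator_of_notMem, mem_Iio]
    have hset : Iio x ∩ Ioo (0:ℝ) 1 = Ioo (0:ℝ) x := by
      ext t
      simp only [mem_inter_iff, mem_Iio, mem_Ioo]
      exact ⟨fun ⟨h1, h2, h3⟩ => ⟨h2, h1⟩, fun ⟨h1, h2⟩ => ⟨h2, h1, h2.trans hx.2⟩⟩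
    rw [h1, lintegral_const_mul' _ _ ENNReal.ofReal_ne_top,
      lintegral_indicator measurableSet_Iio,
      Measure.restrict_restrict measurableSet_Iio, hset]
  have hR : ∫⁻ t in Ioo (0:ℝ) 1, (G t * ∫⁻ x in Ioo t 1, ENNReal.ofReal (x^γ))
      = ∫⁻ t in Ioo (0:ℝ) 1, ∫⁻ x in Ioo (0:ℝ) 1, F x t := by
    refine setLIntegral_congr_fun measurableSet_Ioo ?_
    intro t ht
    beta_reduce
    have h1 : (fun x => F x t) =
        fun x => (Ioi t).indicator (fun x => ENNReal.ofReal (x^γ)) x * G t := by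
      funext x
      by_cases h : t < x
      · simp [hF, hS, h, Set.indicator_of_mem, mem_Ioi.2 h]
      · simp [hF, hS, h, Set.indicator_of_notMem, mem_Ioi]
    have hset : Ioi t ∩ Ioo (0:ℝ) 1 = Ioo t 1 := by
      ext x
      simp only [mem_inter_iff, mem_Ioi, mem_Ioo]
      exact ⟨fun ⟨h1, h2, h3⟩ => ⟨h1, h3⟩, fun ⟨h1, h2⟩ => ⟨h1, ht.1.trans h1, h2⟩⟩
    rw [h1, lintegral_mul_const'' _
        (((by measurability : Measurable fun x : ℝ => x ^ γ).ennreal_ofReal.indicator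
          measurableSet_Ioi).aemeasurable),
      lintegral_indicator measurableSet_Ioi,
      Measure.restrict_restrict measurableSet_Ioi, hset, mul_comm]
  rw [hL, hR, lintegral_lintegral_swap hFm]

/-- Hardy-type inequality: for `0 ≤ α < 1` and every locally absolutely continuous
function `u` on `(0,1)` (encoded via the fundamental theorem of calculus with locally
integrable a.e. derivative `u'`) with `u(x) → 0` as `x → 0⁺` and
`∫₀¹ x^α u'(x)² dx < ∞`, one has
`∫₀¹ x^(α-2) u(x)² dx ≤ 4/(1-α)² ∫₀¹ x^α u'(x)² dx`. -/
theorem stmt_0 (α : ℝ) (hα0 : 0 ≤ α) (hα1 : α < 1)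
    (u u' : ℝ → ℝ)
    (hint : ∀ x ∈ Ioo (0:ℝ) 1, ∀ y ∈ Ioo (0:ℝ) 1, IntervalIntegrable u' volume x y)
    (hFTC : ∀ x ∈ Ioo (0:ℝ) 1, ∀ y ∈ Ioo (0:ℝ) 1, u y - u x = ∫ t in x..y, u' t)
    (hlim : Filter.Tendsto u (nhdsWithin 0 (Ioi 0)) (nhds 0))
    (hfin : ∫⁻ x in Ioo (0:ℝ) 1, ENNReal.ofReal (x ^ α * (u' x) ^ 2) < ⊤) :
    ∫⁻ x in Ioo (0:ℝ) 1, ENNReal.ofReal (x ^ (α - 2) * (u x) ^ 2) ≤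
      ENNReal.ofReal (4 / (1 - α) ^ 2) *
        ∫⁻ x in Ioo (0:ℝ) 1, ENNReal.ofReal (x ^ α * (u' x) ^ 2) := by
  have h1α : (0:ℝ) < 1 - α := by linarith
  set β : ℝ := (1+α)/2 with hβdef
  have hβ1 : β < 1 := by rw [hβdef]; linarith
  set γ : ℝ := α - 1 - β with hγdef
  have hγ : γ < -1 := by rw [hγdef, hβdef]; linarith
  have hmeas : AEMeasurable u' (volume.restrict (Ioo (0:ℝ) 1)) := hardy_meas u' hint
  set v := hmeas.mk u' with hvdef
  have hv : Measurable v := hmeas.measurable_mk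
  have hvae : u' =ᵐ[volume.restrict (Ioo (0:ℝ) 1)] v := hmeas.ae_eq_mk
  set G : ℝ → ℝ≥0∞ := fun t => ENNReal.ofReal (t ^ β * v t ^ 2) with hGdef
  have hG : Measurable G :=
    ((by measurability : Measurable fun t : ℝ => t ^ β).mul (hv.pow_const 2)).ennreal_ofReal
  have hIeq : ∫⁻ t in Ioo (0:ℝ) 1, ENNReal.ofReal (t ^ α * u' t ^ 2)
      = ∫⁻ t in Ioo (0:ℝ) 1, ENNReal.ofReal (t ^ α * v t ^ 2) :=
    lintegral_congr_ae (by filter_upwards [hvae] with t h; rw [h])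
  have step1 : ∫⁻ x in Ioo (0:ℝ) 1, ENNReal.ofReal (x ^ (α - 2) * (u x) ^ 2) ≤
      ∫⁻ x in Ioo (0:ℝ) 1, ENNReal.ofReal (1/(1-β)) *
        (ENNReal.ofReal (x^γ) * ∫⁻ t in Ioo (0:ℝ) x, G t) := by
    refine lintegral_mono_ae ?_
    filter_upwards [ae_restrict_mem measurableSet_Ioo] with x hx
    have hGx : ∫⁻ t in Ioo (0:ℝ) x, ENNReal.ofReal (t ^ β * u' t ^ 2)
        = ∫⁻ t in Ioo (0:ℝ) x, G t := by
      refine lintegral_congr_ae ?_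
      have hsub : ∀ᵐ t ∂volume.restrict (Ioo (0:ℝ) x), u' t = v t :=
        ae_restrict_of_ae_restrict_of_subset (Ioo_subset_Ioo le_rfl hx.2.le) hvae
      filter_upwards [hsub] with t h
      rw [hGdef, h]
    have hp := hardy_ptwise β hβ1 u u' hint hFTC hlim hmeas x hx
    have he1 : x ^ (α-2) * (x ^ (1-β)/(1-β)) = 1/(1-β) * x ^ γ := by
      have e0 : x ^ (α-2) * x ^ (1-β) = x ^ γ := by
        rw [← Real.rpow_add hx.1]
        congr 1
        rw [hγdef]; ring
      rw [← e0]; ring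
    calc ENNReal.ofReal (x ^ (α - 2) * (u x) ^ 2)
        = ENNReal.ofReal (x ^ (α-2)) * ENNReal.ofReal (u x ^ 2) :=
          ENNReal.ofReal_mul (Real.rpow_nonneg hx.1.le _)
      _ ≤ ENNReal.ofReal (x ^ (α-2)) * (ENNReal.ofReal (x ^ (1-β)/(1-β)) *
            ∫⁻ t in Ioo (0:ℝ) x, ENNReal.ofReal (t ^ β * u' t ^ 2)) :=
          mul_le_mul_right hp _
      _ = ENNReal.ofReal (1/(1-β)) * (ENNReal.ofReal (x^γ) * ∫⁻ t in Ioo (0:ℝ) x, G t) := by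
          rw [hGx, ← mul_assoc, ← mul_assoc,
            ← ENNReal.ofReal_mul (Real.rpow_nonneg hx.1.le _), he1,
            ENNReal.ofReal_mul (div_nonneg zero_le_one (by linarith))]
  have step2 : ∫⁻ x in Ioo (0:ℝ) 1, ENNReal.ofReal (1/(1-β)) *
        (ENNReal.ofReal (x^γ) * ∫⁻ t in Ioo (0:ℝ) x, G t)
      = ENNReal.ofReal (1/(1-β)) *
        ∫⁻ x in Ioo (0:ℝ) 1, (ENNReal.ofReal (x^γ) * ∫⁻ t in Ioo (0:ℝ) x, G t) :=
    lintegral_const_mul' _ _ ENNReal.ofReal_ne_top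
  have step4 : ∫⁻ t in Ioo (0:ℝ) 1, (G t * ∫⁻ x in Ioo t 1, ENNReal.ofReal (x^γ))
      ≤ ENNReal.ofReal (2/(1-α)) *
        ∫⁻ t in Ioo (0:ℝ) 1, ENNReal.ofReal (t ^ α * v t ^ 2) := by
    rw [← lintegral_const_mul' _ _ ENNReal.ofReal_ne_top]
    refine lintegral_mono_ae ?_
    filter_upwards [ae_restrict_mem measurableSet_Ioo] with t ht
    rw [hardy_lintB γ t hγ ht.1 ht.2]
    have hd : (0:ℝ) < -(γ+1) := by linarith
    calc G t * ENNReal.ofReal ((t ^ (γ+1) - 1)/(-(γ+1)))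
        ≤ G t * ENNReal.ofReal (t ^ (γ+1)/(-(γ+1))) := by
          refine mul_le_mul_right (ENNReal.ofReal_le_ofReal ?_) _
          gcongr
          linarith
      _ = ENNReal.ofReal (2/(1-α)) * ENNReal.ofReal (t ^ α * v t ^ 2) := by
          rw [hGdef, ← ENNReal.ofReal_mul
            (mul_nonneg (Real.rpow_nonneg ht.1.le _) (sq_nonneg _)),
            ← ENNReal.ofReal_mul (by positivity : (0:ℝ) ≤ 2/(1-α))]
          congr 1
          have e1 : t ^ β * t ^ (γ+1) = t ^ α := by
            rw [← Real.rpow_add ht.1]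
            congr 1
            rw [hγdef]; ring
          have e2 : -(γ+1) = (1-α)/2 := by rw [hγdef, hβdef]; ring
          rw [← e1, e2]
          have h2 : (1-α)/2 ≠ 0 := by positivity
          field_simp
  have hconst : ENNReal.ofReal (1/(1-β)) * ENNReal.ofReal (2/(1-α))
      = ENNReal.ofReal (4/(1-α)^2) := by
    rw [← ENNReal.ofReal_mul (div_nonneg zero_le_one (by linarith))]
    congr 1
    rw [hβdef]
    have : (1:ℝ) - (1+α)/2 = (1-α)/2 := by ring
    rw [this]
    field_simp
    ring
  calc ∫⁻ x in Ioo (0:ℝ) 1, ENNReal.ofReal (x ^ (α - 2) * (u x) ^ 2)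
      ≤ ENNReal.ofReal (1/(1-β)) *
        ∫⁻ x in Ioo (0:ℝ) 1, (ENNReal.ofReal (x^γ) * ∫⁻ t in Ioo (0:ℝ) x, G t) :=
        step1.trans (le_of_eq step2)
    _ = ENNReal.ofReal (1/(1-β)) *
        ∫⁻ t in Ioo (0:ℝ) 1, (G t * ∫⁻ x in Ioo t 1, ENNReal.ofReal (x^γ)) := by
        rw [hardy_tonelli γ G hG]
    _ ≤ ENNReal.ofReal (1/(1-β)) * (ENNReal.ofReal (2/(1-α)) *
        ∫⁻ t in Ioo (0:ℝ) 1, ENNReal.ofReal (t ^ α * v t ^ 2)) :=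
        mul_le_mul_right step4 _
    _ = ENNReal.ofReal (4/(1-α)^2) *
        ∫⁻ x in Ioo (0:ℝ) 1, ENNReal.ofReal (x ^ α * (u' x) ^ 2) := by
        rw [← mul_assoc, hconst, hIeq]
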